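/- Let I be a finite set and c : I × I × [0,T] → ℝ a family of continuous nonnegative switching cost functions satisfying the no-free-loop condition: there exists ε > 0 such that for every k ≥ 2, every sequence of modes b₁,…,b_k ∈ I and times 0 ≤ t₁ ≤ … ≤ t_k ≤ T one has c(b₁,b₂)(t₁) + c(b₂,b₃)(t₂) + … + c(b_{k-1},b_k)(t_{k-1}) + c(b_k,b₁)(t_k) ≥ ε. Then for any control consisting of N switches with modes β₀, β₁, …, β_N (β_j ≠ β_{j-1}) at nondecreasing times τ₁ ≤ … ≤ τ_N in [0,T], the total switching cost satisfies ∑_{j=1}^N c(β_{j-1},β_j)(τ_j) ≥ ε·(N - m)/m, where m is the cardinality of I. -/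
import Mathlib


open Finset

/-- No-free-loop condition implies the total switching cost of any control with `N`
switches is at least `ε (N - m)/m`, where `m = |I|`. -/
theorem stmt0 {I : Type*} [Fintype I] (T ε : ℝ) (hT : 0 ≤ T) (hε : 0 < ε)
    (c : I → I → ℝ → ℝ)
    (hcont : ∀ b b', Continuous (c b b'))
    (hnonneg : ∀ b b' t, 0 ≤ c b b' t)
    (hloop : ∀ k : ℕ, 2 ≤ k → ∀ b : ℕ → I, ∀ t : ℕ → ℝ,
      (∀ i, t i ∈ Set.Icc 0 T) → (∀ i j, i ≤ j → t i ≤ t j) →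
      ε ≤ (∑ j ∈ Finset.range (k - 1), c (b j) (b (j + 1)) (t j)) +
        c (b (k - 1)) (b 0) (t (k - 1)))
    (N : ℕ) (β : ℕ → I) (τ : ℕ → ℝ)
    (hτmem : ∀ j < N, τ j ∈ Set.Icc 0 T)
    (hτmono : ∀ i j, i ≤ j → j < N → τ i ≤ τ j)
    (hβ : ∀ j < N, β (j + 1) ≠ β j) :
    ε * ((N : ℝ) - Fintype.card I) / Fintype.card I ≤
      ∑ j ∈ Finset.range N, c (β j) (β (j + 1)) (τ j) := by
  have hne : Nonempty I := ⟨β 0⟩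
  set m := Fintype.card I with hm
  have hm0 : 0 < m := Fintype.card_pos
  have hmR : (0:ℝ) < m := by exact_mod_cast hm0
  induction N using Nat.strong_induction_on generalizing β τ with
  | _ n IH =>
  by_cases hn : n ≤ m
  · -- trivial case: RHS nonpositive, sum nonnegative
    have h1 : ε * ((n : ℝ) - m) / m ≤ 0 := by
      apply div_nonpos_of_nonpos_of_nonneg _ hmR.le
      have : (n:ℝ) - m ≤ 0 := by
        have : (n:ℝ) ≤ m := by exact_mod_cast hn
        linarith
      nlinarith
    have h2 : (0:ℝ) ≤ ∑ j ∈ Finset.range n, c (β j) (β (j + 1)) (τ j) :=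
      Finset.sum_nonneg fun j _ => hnonneg _ _ _
    linarith
  · push_neg at hn  -- m < n
    -- pigeonhole on β 0, ..., β m
    obtain ⟨p', q', hpq_ne, hpq_eq⟩ :
        ∃ p q : Fin (m+1), p ≠ q ∧ β (p:ℕ) = β (q:ℕ) := by
      have hcard : Fintype.card I < Fintype.card (Fin (m+1)) := by
        simp [hm]
      obtain ⟨a, b, hab, h⟩ := Fintype.exists_ne_map_eq_of_card_lt
        (fun i : Fin (m+1) => β (i:ℕ)) hcard
      exact ⟨a, b, hab, h⟩
    -- WLOG p < q
    obtain ⟨p, q, hplt, hqm, hβpq⟩ : ∃ p q : ℕ, p < q ∧ q ≤ m ∧ β p = β q := by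
      rcases lt_or_gt_of_ne hpq_ne with h | h
      · exact ⟨p', q', h, Nat.lt_succ_iff.mp q'.isLt, hpq_eq⟩
      · exact ⟨q', p', h, Nat.lt_succ_iff.mp p'.isLt, hpq_eq.symm⟩
    set k := q - p with hk
    have hq : q = p + k := by omega
    have hpk : p + k ≤ m := by omega
    have hk1 : 1 ≤ k := by omega
    have hk2 : 2 ≤ k := by
      by_contra h
      have hk1' : k = 1 := by omega
      have : β (p + 1) = β p := by
        rw [hβpq]; congr 1; omega
      exact hβ p (by omega) this
    -- loop cost ≥ ε
    have hloopcost : ε ≤ ∑ j ∈ Finset.range k, c (β (p + j)) (β (p + j + 1)) (τ (p + j)) := by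
      have key := hloop k hk2 (fun j => β (p + j)) (fun j => τ (p + min j (k-1)))
        (fun i => hτmem _ (by omega)) (fun i j hij => hτmono _ _ (by omega) (by omega))
      have e1 : ∑ j ∈ Finset.range (k - 1),
          c (β (p + j)) (β (p + (j + 1))) (τ (p + min j (k-1)))
          = ∑ j ∈ Finset.range (k - 1), c (β (p + j)) (β (p + j + 1)) (τ (p + j)) := by
        apply Finset.sum_congr rfl
        intro j hj
        have : j < k - 1 := Finset.mem_range.mp hj
        have : min j (k-1) = j := by omega
        rw [this]
        ring_nf
      have e2 : c (β (p + (k - 1))) (β (p + 0)) (τ (p + min (k-1) (k-1)))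
          = c (β (p + (k-1))) (β (p + (k-1) + 1)) (τ (p + (k-1))) := by
        rw [min_self]
        have : β (p + 0) = β (p + (k-1) + 1) := by
          rw [Nat.add_zero, hβpq]; congr 1; omega
        rw [this]
      rw [e1, e2] at key
      calc ε ≤ _ := key
        _ = ∑ j ∈ Finset.range k, c (β (p + j)) (β (p + j + 1)) (τ (p + j)) := by
          rw [show k = (k-1) + 1 by omega, Finset.sum_range_succ]
          simp only [show (k-1)+1-1 = k-1 by omega]
    -- shortened control
    set β' : ℕ → I := fun j => if j < p then β j else β (j + k) with hβ'def
    set τ' : ℕ → ℝ := fun j => if j < p then τ j else τ (j + k) with hτ'def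
    have hkn : k ≤ n := by omega
    have IHres := IH (n - k) (by omega) β' τ'
      (fun j hj => by
        by_cases h : j < p
        · simpa [hτ'def, h] using hτmem j (by omega)
        · simpa [hτ'def, h] using hτmem (j + k) (by omega))
      (fun i j hij hj => by
        by_cases hi : i < p <;> by_cases hjp : j < p
        · simpa [hτ'def, hi, hjp] using hτmono i j hij (by omega)
        · simpa [hτ'def, hi, hjp] using hτmono i (j + k) (by omega) (by omega)
        · omega
        · simpa [hτ'def, hi, hjp] using hτmono (i + k) (j + k) (by omega) (by omega))
       (fun j hj => by
        by_cases h1 : j + 1 < p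
        · simpa [hβ'def, h1, show j < p by omega] using hβ j (by omega)
        · by_cases h2 : j < p
          · -- j + 1 = p
            have hjp : j + 1 = p := by omega
            simp only [hβ'def, h1, h2, if_true, if_false, if_neg h1, if_pos h2]
            have : β (j + 1 + k) = β (j + 1) := by
              rw [hjp, ← hq, ← hβpq]
            rw [this]
            exact hβ j (by omega)
          · simp only [hβ'def, if_neg h1, if_neg h2]
            rw [show j + 1 + k = j + k + 1 by omega]
            exact hβ (j + k) (by omega))
    -- sum decomposition
    have hsplit : ∑ j ∈ Finset.range n, c (β j) (β (j + 1)) (τ j)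
        = (∑ j ∈ Finset.range (n - k), c (β' j) (β' (j + 1)) (τ' j))
          + ∑ j ∈ Finset.range k, c (β (p + j)) (β (p + j + 1)) (τ (p + j)) := by
      have h1 : (∑ j ∈ Finset.Ico 0 p, c (β j) (β (j + 1)) (τ j))
          + (∑ j ∈ Finset.Ico p (p+k), c (β j) (β (j + 1)) (τ j))
          + (∑ j ∈ Finset.Ico (p+k) n, c (β j) (β (j + 1)) (τ j))
          = ∑ j ∈ Finset.Ico 0 n, c (β j) (β (j + 1)) (τ j) := by
        rw [Finset.sum_Ico_consecutive _ (Nat.zero_le p) (show p ≤ p + k by omega),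
            Finset.sum_Ico_consecutive _ (Nat.zero_le (p+k)) (show p + k ≤ n by omega)]
      have h2 : (∑ j ∈ Finset.Ico 0 p, c (β' j) (β' (j + 1)) (τ' j))
          + (∑ j ∈ Finset.Ico p (n-k), c (β' j) (β' (j + 1)) (τ' j))
          = ∑ j ∈ Finset.Ico 0 (n-k), c (β' j) (β' (j + 1)) (τ' j) :=
        Finset.sum_Ico_consecutive _ (Nat.zero_le p) (by omega)
      have eA : ∑ j ∈ Finset.Ico 0 p, c (β' j) (β' (j + 1)) (τ' j)
          = ∑ j ∈ Finset.Ico 0 p, c (β j) (β (j + 1)) (τ j) := by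
        apply Finset.sum_congr rfl
        intro j hj
        have hjp : j < p := (Finset.mem_Ico.mp hj).2
        by_cases h1 : j + 1 < p
        · simp [hβ'def, hτ'def, hjp, h1]
        · have hjp1 : j + 1 = p := by omega
          simp only [hβ'def, hτ'def, if_pos hjp, if_neg h1]
          have : β (j + 1 + k) = β (j + 1) := by rw [hjp1, ← hq, ← hβpq]
          rw [this]
      have eB : ∑ j ∈ Finset.Ico p (p + k), c (β j) (β (j + 1)) (τ j)
          = ∑ j ∈ Finset.range k, c (β (p + j)) (β (p + j + 1)) (τ (p + j)) := by
        rw [Finset.sum_Ico_eq_sum_range]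
        simp only [Nat.add_sub_cancel_left]
      have eC : ∑ j ∈ Finset.Ico p (n - k), c (β' j) (β' (j + 1)) (τ' j)
          = ∑ j ∈ Finset.Ico (p + k) n, c (β j) (β (j + 1)) (τ j) := by
        rw [Finset.sum_Ico_eq_sum_range, Finset.sum_Ico_eq_sum_range]
        have : n - (p + k) = n - k - p := by omega
        rw [this]
        apply Finset.sum_congr rfl
        intro j _
        have h2 : ¬ (p + j < p) := by omega
        have h3 : ¬ (p + j + 1 < p) := by omega
        simp only [hβ'def, hτ'def, if_neg h2, if_neg h3]
        congr 2 <;> omega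
      simp only [Finset.range_eq_Ico] at eB ⊢
      linarith [h1, h2, eA, eB, eC]
    rw [hsplit]
    have hcast : ((n - k : ℕ) : ℝ) = (n : ℝ) - k := by
      have : k ≤ n := hkn
      push_cast [this]
      ring
    rw [hcast] at IHres
    have harith : ε * ((n : ℝ) - m) / m ≤ ε * ((n : ℝ) - k - m) / m + ε := by
      rw [div_add' _ _ _ (ne_of_gt hmR), div_le_div_iff₀ hmR hmR]
      have hkm : (k : ℝ) ≤ m := by exact_mod_cast (show k ≤ m by omega)
      nlinarith [mul_nonneg (mul_nonneg hε.le (sub_nonneg.mpr hkm)) hmR.le]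
    linarith
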